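/- arXiv:2001.04545 — 2 statements merged into one kernel-verified Lean document; each statement's English description precedes it below -/
import Mathlib

section
/- Let K, M, D be positive integers with K ≥ M + D and D ≤ M. Then ⌈(K−M−D)/(⌊M/D⌋+1)⌉ + 1 ≥ ⌈K/(M+D)⌉, i.e., the JPC-SI download-cost lower bound is at least the IPC-SI optimal download cost. -/
/-- The JPC-SI download-cost lower bound of Theorem 3 is at least the
IPC-SI optimal download cost of Theorem 1:
`⌈(K-M-D)/(⌊M/D⌋+1)⌉ + 1 ≥ ⌈K/(M+D)⌉`. -/
theorem stmt_14 (K M D : ℕ) (hK : 0 < K) (hM : 0 < M) (hD : 0 < D)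
    (hKMD : M + D ≤ K) (hDM : D ≤ M) :
    K ⌈/⌉ (M + D) ≤ (K - M - D) ⌈/⌉ (M / D + 1) + 1 := by
  set q := M / D + 1 with hq
  have hq0 : 0 < q := Nat.succ_pos _
  have hqle : q ≤ M + D := by
    have := Nat.div_le_self M D
    omega
  set n := K - M - D with hn
  have h1 : n ≤ q * (n ⌈/⌉ q) := le_smul_ceilDiv hq0
  rw [ceilDiv_le_iff_le_mul (by omega : 0 < M + D)]
  have h2 : q * (n ⌈/⌉ q) ≤ (M + D) * (n ⌈/⌉ q) :=
    Nat.mul_le_mul_right _ hqle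
  have h3 : (M + D) * (n ⌈/⌉ q + 1) = (M + D) * (n ⌈/⌉ q) + (M + D) := by ring
  omega
end

section
/- Let A, Q be random variables and X_S, Z, X_{S_1}, Z_1 be random variables on a common finite probability space such that H(Z_1 | A, Q, X_S, Z, X_{S_1}) = 0 and Z_1 is independent of the tuple (Q, X_S, Z, X_{S_1}). Then H(A | Q, X_S, Z) ≥ H(Z_1) + H(A | Q, X_S, Z, X_{S_1}, Z_1). -/
/-!
Put `W = (Q, X_S, Z, X_{S₁})`. Since `Z₁` is recoverable from `(A, W)`, `H(A, W, Z₁) = H(A, W)`;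
since `Z₁` is independent of `W`, `H(W, Z₁) = H(W) + H(Z₁)`. Subtracting gives
`H(A | W) = H(Z₁) + H(A | W, Z₁)`, and `H(A | Q, X_S, Z) ≥ H(A | W)` because conditioning on the
extra `X_{S₁}` cannot increase entropy. The latter reduces, on each fibre of the conditioning
variable, to Jensen's inequality for the concave function `x ↦ -x log x`.
-/
noncomputable section

/-- Probability of an event `E` under the weight function `p` on a finite
sample space `Ω`. -/
def prEvent {Ω : Type*} [Fintype Ω] (p : Ω → ℝ) (E : Set Ω) : ℝ :=
  ∑ ω : Ω, E.indicator p ω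

/-- Base-2 Shannon entropy of a finitely-valued random variable `X` (with the
convention `0 · log₂ 0 = 0`, automatic since `Real.logb 2 0 = 0`). -/
def entropy {Ω α : Type*} [Fintype Ω] [Fintype α] (p : Ω → ℝ) (X : Ω → α) : ℝ :=
  -∑ x : α, prEvent p {ω | X ω = x} * Real.logb 2 (prEvent p {ω | X ω = x})

/-- Conditional Shannon entropy `H(X | Y) = H(X, Y) - H(Y)`. -/
def condEntropy {Ω α β : Type*} [Fintype Ω] [Fintype α] [Fintype β]
    (p : Ω → ℝ) (X : Ω → α) (Y : Ω → β) : ℝ :=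
  entropy p (fun ω => (X ω, Y ω)) - entropy p Y

/-- Independence of two finitely-valued random variables. -/
def IndepRV {Ω α β : Type*} [Fintype Ω] [Fintype α] [Fintype β]
    (p : Ω → ℝ) (X : Ω → α) (Y : Ω → β) : Prop :=
  ∀ (x : α) (y : β),
    prEvent p {ω | X ω = x ∧ Y ω = y}
      = prEvent p {ω | X ω = x} * prEvent p {ω | Y ω = y}

open Real Finset

section NegMulLog

variable {ι κ : Type*} [Fintype ι] [Fintype κ]

lemma sum_negMulLog_eq_negMulLog_sum_add {q : ι → ℝ} (hq : ∀ i, 0 ≤ q i) :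
    ∑ i, negMulLog (q i)
      = negMulLog (∑ i, q i) + (∑ i, q i) * ∑ i, negMulLog (q i / ∑ j, q j) := by
  set s := ∑ i, q i with hs_def
  rcases eq_or_ne s 0 with hs | hs
  · simp [hs, (Fintype.sum_eq_zero_iff_of_nonneg hq).1 hs]
  have hsplit (i : ι) : negMulLog (q i) = q i / s * negMulLog s + s * negMulLog (q i / s) := by
    rw [← negMulLog_mul, mul_div_cancel₀ _ hs]
  simp only [hsplit, sum_add_distrib, ← sum_mul, ← mul_sum, ← sum_div]
  rw [← hs_def, div_self hs, one_mul]

lemma sum_mul_negMulLog_le {w t : ι → ℝ} (hw : ∀ i, 0 ≤ w i) (ht : ∀ i, 0 ≤ t i) :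
    ∑ i, w i * negMulLog (t i) ≤ (∑ i, w i) * negMulLog ((∑ i, w i * t i) / ∑ i, w i) := by
  set s := ∑ i, w i
  rcases (sum_nonneg fun i _ => hw i).eq_or_lt with hs | hs
  · simp [(Fintype.sum_eq_zero_iff_of_nonneg hw).1 hs.symm]
  have jensen := concaveOn_negMulLog.le_map_centerMass (t := univ) (fun i _ => hw i) hs
    (fun i _ => Set.mem_Ici.2 (ht i))
  simp only [centerMass, smul_eq_mul, Function.comp_apply] at jensen
  rw [inv_mul_eq_div, div_le_iff₀ hs, inv_mul_eq_div] at jensen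
  linarith [jensen]

-- `H(X | Y) ≤ H(X)`, for a joint law `q` of `(X, Y)` that need not be normalised.
lemma sum_sum_negMulLog_sub_le {q : ι → κ → ℝ} (hq : ∀ i k, 0 ≤ q i k) :
    ∑ i, ∑ k, negMulLog (q i k) - ∑ k, negMulLog (∑ i, q i k)
      ≤ ∑ i, negMulLog (∑ k, q i k) - negMulLog (∑ i, ∑ k, q i k) := by
  set b : κ → ℝ := fun k => ∑ i, q i k
  have hb (k : κ) : 0 ≤ b k := sum_nonneg fun i _ => hq i k
  have hbq (i : ι) (k : κ) : b k * (q i k / b k) = q i k := by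
    rcases eq_or_ne (b k) 0 with h | h
    · simp [h, congrFun ((Fintype.sum_eq_zero_iff_of_nonneg fun i => hq i k).1 h) i]
    · exact mul_div_cancel₀ _ h
  calc ∑ i, ∑ k, negMulLog (q i k) - ∑ k, negMulLog (b k)
      = ∑ i, ∑ k, b k * negMulLog (q i k / b k) := by
        have hfiber (k : κ) :
            ∑ i, negMulLog (q i k) - negMulLog (b k) = b k * ∑ i, negMulLog (q i k / b k) := by
          rw [sum_negMulLog_eq_negMulLog_sum_add fun i => hq i k]
          ring
        rw [sum_comm, ← sum_sub_distrib]
        simp only [hfiber, mul_sum]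
        exact sum_comm
    _ ≤ ∑ i, (∑ k, b k) * negMulLog ((∑ k, q i k) / ∑ k, b k) := by
        gcongr with i
        simpa only [hbq] using sum_mul_negMulLog_le hb fun k => div_nonneg (hq i k) (hb k)
    _ = ∑ i, negMulLog (∑ k, q i k) - negMulLog (∑ i, ∑ k, q i k) := by
        rw [sum_negMulLog_eq_negMulLog_sum_add fun i => sum_nonneg fun k _ => hq i k,
          sum_comm (f := fun k i => q i k), ← mul_sum]
        ring

end NegMulLog

section Law

variable {Ω α β : Type*} [Fintype Ω] (p : Ω → ℝ)

def law (X : Ω → α) (a : α) : ℝ := prEvent p {ω | X ω = a}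

lemma law_eq_sum_ite [DecidableEq α] (X : Ω → α) (a : α) :
    law p X a = ∑ ω, if X ω = a then p ω else 0 := by
  simp only [law, prEvent, Set.indicator_apply, Set.mem_ofPred_eq]

lemma law_nonneg (hp : ∀ ω, 0 ≤ p ω) (X : Ω → α) (a : α) : 0 ≤ law p X a :=
  sum_nonneg fun ω _ => Set.indicator_nonneg (fun ω _ => hp ω) ω

lemma sum_law [Fintype α] (X : Ω → α) : ∑ a, law p X a = ∑ ω, p ω := by
  classical
  simp only [law_eq_sum_ite]
  rw [sum_comm]
  simp

lemma sum_law_pair_left [Fintype α] (X : Ω → α) (Y : Ω → β) (b : β) :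
    ∑ a, law p (fun ω => (X ω, Y ω)) (a, b) = law p Y b := by
  classical
  simp only [law_eq_sum_ite, Prod.mk.injEq]
  rw [sum_comm]
  simp [ite_and]

lemma law_comp_injective (X : Ω → α) {e : α → β} (he : Function.Injective e) (a : α) :
    law p (fun ω => e (X ω)) (e a) = law p X a := by
  simp only [law, he.eq_iff]

lemma entropy_eq_sum_negMulLog [Fintype α] (X : Ω → α) :
    entropy p X = (∑ a, negMulLog (law p X a)) / log 2 := by
  simp only [entropy, law, negMulLog, logb, sum_div, ← sum_neg_distrib]
  exact sum_congr rfl fun a _ => by ring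

end Law

section Entropy

variable {Ω α β γ : Type*} [Fintype Ω] [Fintype α] [Fintype β] [Fintype γ] (p : Ω → ℝ)

lemma entropy_comp_injective (X : Ω → α) {e : α → β} (he : Function.Injective e) :
    entropy p (fun ω => e (X ω)) = entropy p X := by
  rw [entropy_eq_sum_negMulLog, entropy_eq_sum_negMulLog]
  congr 1
  refine (Fintype.sum_of_injective e he _ _ (fun b hb => ?_) fun a => ?_).symm
  · have : {ω | e (X ω) = b} = ∅ := Set.eq_empty_of_forall_notMem fun ω h => hb ⟨X ω, h⟩
    simp [law, this, prEvent]
  · rw [law_comp_injective p X he]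

lemma entropy_pair_comm (X : Ω → α) (Y : Ω → β) :
    entropy p (fun ω => (X ω, Y ω)) = entropy p (fun ω => (Y ω, X ω)) :=
  entropy_comp_injective p (fun ω => (Y ω, X ω)) Prod.swap_injective

lemma condEntropy_comp_injective (X : Ω → α) (Y : Ω → β) {e : β → γ}
    (he : Function.Injective e) :
    condEntropy p X (fun ω => e (Y ω)) = condEntropy p X Y := by
  unfold condEntropy
  rw [entropy_comp_injective p Y he]
  congr 1
  exact entropy_comp_injective p (fun ω => (X ω, Y ω)) (Function.injective_id.prodMap he)

lemma entropy_pair_of_indep (hp1 : ∑ ω, p ω = 1) (X : Ω → α) (Y : Ω → β)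
    (h : IndepRV p X Y) :
    entropy p (fun ω => (X ω, Y ω)) = entropy p X + entropy p Y := by
  have hlaw (a : α) (b : β) : law p (fun ω => (X ω, Y ω)) (a, b) = law p X a * law p Y b := by
    simpa only [law, Prod.mk.injEq] using h a b
  simp only [entropy_eq_sum_negMulLog, ← add_div, Fintype.sum_prod_type, hlaw, negMulLog_mul,
    sum_add_distrib, ← sum_mul, ← mul_sum, sum_law, hp1, one_mul]

end Entropy

section CondEntropy

variable {Ω α β γ : Type*} [Fintype Ω] [Fintype α] [Fintype β] [Fintype γ] (p : Ω → ℝ)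

lemma condEntropy_pair_le (hp : ∀ ω, 0 ≤ p ω) (X : Ω → α) (Y : Ω → β) (U : Ω → γ) :
    condEntropy p X (fun ω => (Y ω, U ω)) ≤ condEntropy p X U := by
  let q (x : α) (y : β) (u : γ) : ℝ := law p (fun ω => (X ω, Y ω, U ω)) (x, y, u)
  have hXYU (x : α) (y : β) (u : γ) : law p (fun ω => (X ω, Y ω, U ω)) (x, y, u) = q x y u := rfl
  have hYU (y : β) (u : γ) : law p (fun ω => (Y ω, U ω)) (y, u) = ∑ x, q x y u :=
    (sum_law_pair_left p X (fun ω => (Y ω, U ω)) (y, u)).symm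
  have hXU (x : α) (u : γ) : law p (fun ω => (X ω, U ω)) (x, u) = ∑ y, q x y u := by
    rw [← sum_law_pair_left p Y (fun ω => (X ω, U ω)) (x, u)]
    simp only [q, law, Prod.mk.injEq, and_left_comm]
  have hU (u : γ) : law p U u = ∑ x, ∑ y, q x y u := by
    simp only [← hXU, sum_law_pair_left]
  have hfibers : ∑ u, (∑ x, ∑ y, negMulLog (q x y u) - ∑ y, negMulLog (∑ x, q x y u))
      ≤ ∑ u, (∑ x, negMulLog (∑ y, q x y u) - negMulLog (∑ x, ∑ y, q x y u)) :=
    sum_le_sum fun u _ => sum_sum_negMulLog_sub_le fun x y => law_nonneg p hp _ (x, y, u)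
  have hXYU_comm : ∑ u, ∑ x, ∑ y, negMulLog (q x y u) = ∑ x, ∑ y, ∑ u, negMulLog (q x y u) := by
    rw [sum_comm]
    exact sum_congr rfl fun x _ => sum_comm
  have hYU_comm : ∑ u, ∑ y, negMulLog (∑ x, q x y u) = ∑ y, ∑ u, negMulLog (∑ x, q x y u) :=
    sum_comm
  have hXU_comm : ∑ u, ∑ x, negMulLog (∑ y, q x y u) = ∑ x, ∑ u, negMulLog (∑ y, q x y u) :=
    sum_comm
  rw [sum_sub_distrib, sum_sub_distrib, hXYU_comm, hYU_comm, hXU_comm] at hfibers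
  unfold condEntropy
  simp only [entropy_eq_sum_negMulLog, Fintype.sum_prod_type, hXYU, hYU, hXU, hU, ← sub_div]
  exact div_le_div_of_nonneg_right hfibers (log_nonneg one_le_two)

end CondEntropy

lemma condEntropy_eq_entropy_add_condEntropy_of_indep {Ω α β γ : Type*} [Fintype Ω]
    [Fintype α] [Fintype β] [Fintype γ] (p : Ω → ℝ) (hp1 : ∑ ω, p ω = 1)
    (A : Ω → α) (W : Ω → β) (Z : Ω → γ)
    (hrec : condEntropy p Z (fun ω => (A ω, W ω)) = 0) (hindep : IndepRV p Z W) :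
    condEntropy p A W = entropy p Z + condEntropy p A (fun ω => (W ω, Z ω)) := by
  have hZAW : entropy p (fun ω => (Z ω, A ω, W ω)) = entropy p (fun ω => (A ω, W ω)) :=
    sub_eq_zero.1 hrec
  have hAWZ : entropy p (fun ω => (A ω, W ω, Z ω)) = entropy p (fun ω => (Z ω, A ω, W ω)) :=
    (entropy_comp_injective p (fun ω => (A ω, W ω, Z ω)) (e := fun t => (t.2.2, t.1, t.2.1))
      (Function.LeftInverse.injective (g := fun s => (s.2.1, s.2.2, s.1)) fun _ => rfl)).symm
  simp only [condEntropy]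
  rw [hAWZ, hZAW, entropy_pair_comm p W Z, entropy_pair_of_indep p hp1 Z W hindep]
  ring

/-- The chain-rule step (equation (2)) in the converse proof of the IPC-SI
capacity: if `Z₁` is recoverable from `(A, Q, X_S, Z, X_{S₁})` and is
independent of `(Q, X_S, Z, X_{S₁})`, then
`H(A | Q, X_S, Z) ≥ H(Z₁) + H(A | Q, X_S, Z, X_{S₁}, Z₁)`. -/
theorem stmt_16 {Ω α β γ δ γ₁ δ₁ : Type*} [Fintype Ω]
    [Fintype α] [Fintype β] [Fintype γ] [Fintype δ] [Fintype γ₁] [Fintype δ₁]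
    (p : Ω → ℝ) (hp : ∀ ω, 0 ≤ p ω) (hp1 : ∑ ω : Ω, p ω = 1)
    (A : Ω → α) (Q : Ω → β) (XS : Ω → γ) (Z : Ω → δ)
    (XS1 : Ω → γ₁) (Z1 : Ω → δ₁)
    (hrec : condEntropy p Z1 (fun ω => (A ω, Q ω, XS ω, Z ω, XS1 ω)) = 0)
    (hindep : IndepRV p Z1 (fun ω => (Q ω, XS ω, Z ω, XS1 ω))) :
    condEntropy p A (fun ω => (Q ω, XS ω, Z ω))
      ≥ entropy p Z1
        + condEntropy p A (fun ω => (Q ω, XS ω, Z ω, XS1 ω, Z1 ω)) := by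
  have hmonotone : condEntropy p A (fun ω => (Q ω, XS ω, Z ω, XS1 ω))
      ≤ condEntropy p A (fun ω => (Q ω, XS ω, Z ω)) :=
    calc condEntropy p A (fun ω => (Q ω, XS ω, Z ω, XS1 ω))
        = condEntropy p A (fun ω => (XS1 ω, Q ω, XS ω, Z ω)) :=
          condEntropy_comp_injective p A (fun ω => (XS1 ω, Q ω, XS ω, Z ω))
            (e := fun t => (t.2.1, t.2.2.1, t.2.2.2, t.1))
            (Function.LeftInverse.injective (g := fun s => (s.2.2.2, s.1, s.2.1, s.2.2.1))
              fun _ => rfl)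
      _ ≤ condEntropy p A (fun ω => (Q ω, XS ω, Z ω)) := condEntropy_pair_le p hp A XS1 _
  have hchain := condEntropy_eq_entropy_add_condEntropy_of_indep p hp1 A _ Z1 hrec hindep
  have hregroup : condEntropy p A (fun ω => (Q ω, XS ω, Z ω, XS1 ω, Z1 ω))
      = condEntropy p A (fun ω => ((Q ω, XS ω, Z ω, XS1 ω), Z1 ω)) :=
    condEntropy_comp_injective p A (fun ω => ((Q ω, XS ω, Z ω, XS1 ω), Z1 ω))
      (e := fun t => (t.1.1, t.1.2.1, t.1.2.2.1, t.1.2.2.2, t.2))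
      (Function.LeftInverse.injective
        (g := fun s => ((s.1, s.2.1, s.2.2.1, s.2.2.2.1), s.2.2.2.2)) fun _ => rfl)
  linarith
end
end
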